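/- arXiv:0908.1942 — 6 statements merged into one kernel-verified Lean document; each statement's English description precedes it below -/
import Mathlib

section
/- Let λ < θ be infinite cardinals with θ regular, and let (x_γ)_{γ<θ} be an orthonormal family of vectors in ℓ²(θ). Then there exists an ordinal γ₀ < θ such that for every γ with γ₀ ≤ γ < θ, the vector x_γ is orthogonal to ℓ²(λ); that is, x_γ(ξ) = 0 for every coordinate ξ < λ. -/
/-!
Each coordinate functional `x ↦ x ξ` is an inner product with a unit vector, so by Bessel's
inequality only countably many members of an orthonormal family are nonzero at `ξ`. Hence the
indices `γ` with `x γ` not orthogonal to `ℓ²(λ)` form a union of `λ` countable sets, a set of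
size at most `λ < θ = cf θ`; such a set is bounded in `θ`, and any bound serves as `γ₀`.
-/

open Cardinal

noncomputable section

/-- `ℓ²(θ)`: the complex Hilbert space of square-summable functions on the ordinal `θ.ord`
(realized as the type `θ.ord.toType`). -/
abbrev L2 (θ : Cardinal) : Type := lp (fun _ : θ.ord.ToType => ℂ) 2

/-- A coordinate `ξ` of `ℓ²(θ)` "lies below `lam`" if the corresponding ordinal is `< lam.ord`. -/
def coordBelow (θ : Cardinal) (lam : Cardinal) (ξ : θ.ord.ToType) : Prop :=
  ((Ordinal.ToType.mk (o := θ.ord)).symm ξ : Ordinal) < lam.ord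

open scoped InnerProductSpace

theorem Orthonormal.countable_setOf_inner_ne_zero {ι 𝕜 E : Type*} [RCLike 𝕜]
    [NormedAddCommGroup E] [InnerProductSpace 𝕜 E] {v : ι → E} (hv : Orthonormal 𝕜 v) (y : E) :
    {i | ⟪v i, y⟫_𝕜 ≠ 0}.Countable :=
  (hv.inner_products_summable (x := y)).countable_support.mono fun i hi => by simpa using hi

theorem Orthonormal.countable_setOf_apply_ne_zero {ι κ 𝕜 : Type*} [RCLike 𝕜]
    {v : ι → lp (fun _ : κ => 𝕜) 2} (hv : Orthonormal 𝕜 v) (k : κ) :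
    {i | v i k ≠ 0}.Countable := by
  classical
  refine (hv.countable_setOf_inner_ne_zero (lp.single 2 k 1)).mono fun i hi => ?_
  simpa [lp.inner_single_right] using hi

universe u

theorem Cardinal.mk_iUnion_le_of_countable {α ι : Type u} {c : Cardinal.{u}} (hc : ℵ₀ ≤ c)
    {s : ι → Set α} (hι : #ι ≤ c) (hs : ∀ i, (s i).Countable) : #(⋃ i, s i) ≤ c :=
  calc #(⋃ i, s i) ≤ #ι * ⨆ i, #(s i) := mk_iUnion_le s
    _ ≤ c * ℵ₀ := mul_le_mul' hι (ciSup_le' fun i => (hs i).le_aleph0)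
    _ = c := mul_eq_left hc hc aleph0_ne_zero

theorem Order.exists_forall_lt_of_mk_lt_cof {α : Type*} [LinearOrder α] {s : Set α}
    (hs : #s < Order.cof α) : ∃ a, ∀ b ∈ s, b < a :=
  not_isCofinal_iff.1 fun h => (Order.cof_le h).not_gt hs

theorem mk_coordBelow_le (θ lam : Cardinal) : #{ξ // coordBelow θ lam ξ} ≤ lam := by
  refine (mk_le_of_injective (f := fun ξ : {ξ // coordBelow θ lam ξ} =>
    Ordinal.ToType.mk ⟨(Ordinal.ToType.mk.symm ξ.1 : Ordinal), ξ.2⟩) fun a b hab => ?_).trans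
    (mk_ord_toType lam).le
  exact Subtype.ext <| Ordinal.ToType.mk.symm.injective <| Subtype.ext <| by
    simpa [Subtype.ext_iff] using hab

/-- if `λ < θ` are infinite cardinals, `θ` is regular, and `(x_γ)_{γ<θ}` is an
orthonormal family in `ℓ²(θ)`, then there is `γ₀ < θ` such that every `x_γ` with `γ ≥ γ₀`
is orthogonal to `ℓ²(λ)`, i.e. vanishes on all coordinates `ξ < λ`. -/
theorem stmt0 (lam θ : Cardinal) (hlam : ℵ₀ ≤ lam) (hlt : lam < θ) (hreg : θ.IsRegular)
    (x : θ.ord.ToType → L2 θ) (hx : Orthonormal ℂ x) :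
    ∃ γ₀ : θ.ord.ToType, ∀ γ : θ.ord.ToType, γ₀ ≤ γ →
      ∀ ξ : θ.ord.ToType, coordBelow θ lam ξ → x γ ξ = 0 := by
  set bad := ⋃ ξ : {ξ // coordBelow θ lam ξ}, {γ | x γ ξ ≠ 0}
  have hbad : #bad < Order.cof θ.ord.ToType := by
    rw [Ordinal.cof_toType, hreg.cof_ord]
    exact (mk_iUnion_le_of_countable hlam (mk_coordBelow_le θ lam)
      fun ξ => hx.countable_setOf_apply_ne_zero ξ.1).trans_lt hlt
  obtain ⟨γ₀, hγ₀⟩ := Order.exists_forall_lt_of_mk_lt_cof hbad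
  refine ⟨γ₀, fun γ hγ ξ hξ => ?_⟩
  by_contra hne
  exact (hγ₀ γ (Set.mem_iUnion.2 ⟨⟨ξ, hξ⟩, hne⟩)).not_ge hγ
end
end

section
/- Let λ < θ be infinite cardinals with θ regular and λ^ℵ₀ ≥ θ. Then there exists a dense linear subspace K of ℓ²(θ) such that the restriction of p_λ to K has trivial kernel; that is, the only vector x ∈ K with x(ξ) = 0 for all ξ < λ is x = 0. -/
/-!
Let `Λ` be the set of the first `λ` coordinates. As `Λ` is infinite, finite sequences in `Λ` can be
coded injectively by elements of `Λ`, so every branch `b : ℕ → Λ` of the tree of finite sequences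
yields an injective sequence of nodes `n ↦ code (b 0, …, b (n-1))` in `Λ`, and two distinct branches
share only finitely many nodes. Since `θ ≤ λ ^ ℵ₀`, distinct branches `b_{ξ,k}` can be assigned to
all pairs `(ξ, k) ∈ θ × ℕ`. Let `V_{ξ,k} = ∑ₙ 2⁻ⁿ e_{node n of b_{ξ,k}}` and let `K` be spanned by
the vectors `e_ξ + 2⁻ᵏ V_{ξ,k}`, which tend to `e_ξ` as `k → ∞`; so `K` is dense. Given a finite
combination of these vectors and one of its terms, a deep enough node on that term's branch lies on
no other branch involved and is none of the finitely many `ξ`s involved; evaluating there shows that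
a combination vanishing on `Λ` has zero coefficients.
-/

open Cardinal

noncomputable section

open Filter Function Set Submodule Topology
open scoped ENNReal

section BranchVector

variable {ι 𝕜 : Type*} [DecidableEq ι] [RCLike 𝕜] {p : ℝ≥0∞} [Fact (1 ≤ p)]

variable (𝕜 p) in
def branchVec (m : ℕ → ι) : lp (fun _ : ι => 𝕜) p :=
  ∑' n, (2⁻¹ : 𝕜) ^ n • lp.single p (m n) 1

lemma norm_geom_smul_single (m : ℕ → ι) (n : ℕ) :
    ‖(2⁻¹ : 𝕜) ^ n • lp.single (E := fun _ : ι => 𝕜) p (m n) 1‖ = 2⁻¹ ^ n := by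
  rw [norm_smul, lp.norm_single (zero_lt_one.trans_le Fact.out), norm_one, mul_one, norm_pow,
    norm_inv, RCLike.norm_two]

lemma summable_norm_geom_smul_single (m : ℕ → ι) :
    Summable fun n => ‖(2⁻¹ : 𝕜) ^ n • lp.single (E := fun _ : ι => 𝕜) p (m n) 1‖ := by
  simpa only [norm_geom_smul_single] using summable_geometric_of_lt_one (by norm_num) (by norm_num)

lemma norm_branchVec_le (m : ℕ → ι) : ‖branchVec 𝕜 p m‖ ≤ 2 := by
  simpa only [branchVec, norm_geom_smul_single, tsum_geometric_inv_two] using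
    norm_tsum_le_tsum_norm (summable_norm_geom_smul_single (𝕜 := 𝕜) (p := p) m)

lemma branchVec_apply (m : ℕ → ι) (i : ι) :
    branchVec 𝕜 p m i = ∑' n, (2⁻¹ : 𝕜) ^ n * lp.single (E := fun _ : ι => 𝕜) p (m n) 1 i := by
  have hs := (summable_norm_geom_smul_single (𝕜 := 𝕜) (p := p) m).of_norm
  refine ((lp.evalCLM 𝕜 (fun _ : ι => 𝕜) p i).map_tsum hs).trans (tsum_congr fun n => ?_)
  rw [map_smul, smul_eq_mul]
  rfl

lemma branchVec_apply_self {m : ℕ → ι} (hm : Injective m) (N : ℕ) :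
    branchVec 𝕜 p m (m N) = 2⁻¹ ^ N := by
  rw [branchVec_apply, tsum_eq_single N fun n hn => by
    rw [lp.single_apply_ne p _ _ (hm.ne hn.symm), mul_zero], lp.single_apply_self, mul_one]

lemma branchVec_apply_of_notMem_range {m : ℕ → ι} {i : ι} (hi : i ∉ range m) :
    branchVec 𝕜 p m i = 0 := by
  rw [branchVec_apply]
  refine (tsum_congr fun n => ?_).trans tsum_zero
  rw [lp.single_apply_ne p _ _ fun h => hi ⟨n, h.symm⟩, mul_zero]

end BranchVector

section Density

variable {ι 𝕜 : Type*} [DecidableEq ι] [RCLike 𝕜] {p : ℝ≥0∞} [Fact (1 ≤ p)]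

lemma lp.dense_span_of_forall_single_mem_closure (hp : p ≠ ⊤) {s : Set (lp (fun _ : ι => 𝕜) p)}
    (hs : ∀ i, lp.single p i 1 ∈ closure s) : Dense (span 𝕜 s : Set (lp (fun _ : ι => 𝕜) p)) := by
  rw [dense_iff_topologicalClosure_eq_top, eq_top_iff]
  rintro x -
  have hsingle (i : ι) : lp.single p i (x i) ∈ (span 𝕜 s).topologicalClosure := by
    have h1 : lp.single p i 1 ∈ (span 𝕜 s).topologicalClosure := closure_mono subset_span (hs i)
    simpa [← lp.single_smul] using (span 𝕜 s).topologicalClosure.smul_mem (x i) h1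
  exact (isClosed_topologicalClosure _).mem_of_tendsto (lp.hasSum_single hp x)
    (Eventually.of_forall fun F => sum_mem fun i _ => hsingle i)

end Density

lemma tendsto_add_geom_smul {𝕜 E : Type*} [RCLike 𝕜] [NormedAddCommGroup E] [NormedSpace 𝕜 E]
    (x : E) {v : ℕ → E} {C : ℝ} (hv : ∀ n, ‖v n‖ ≤ C) :
    Tendsto (fun n => x + (2⁻¹ : 𝕜) ^ n • v n) atTop (𝓝 x) := by
  have h : Tendsto (fun n => (2⁻¹ : 𝕜) ^ n) atTop (𝓝 0) :=
    tendsto_pow_atTop_nhds_zero_of_norm_lt_one (by rw [norm_inv, RCLike.norm_two]; norm_num)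
  simpa using tendsto_const_nhds.add (h.zero_smul_isBoundedUnder_le (isBoundedUnder_of ⟨C, hv⟩))

section Independence

variable {ι 𝕜 P : Type*} [DecidableEq ι] [RCLike 𝕜] {p : ℝ≥0∞} [Fact (1 ≤ p)]

variable (𝕜 p) in
def restrictₗ (S : Set ι) : lp (fun _ : ι => 𝕜) p →ₗ[𝕜] (S → 𝕜) :=
  LinearMap.pi fun s => lp.evalₗ (fun _ : ι => 𝕜) p s.1

lemma linearIndependent_restrict_single_add_smul_branchVec {S : Set ι} (a : P → ι)
    {m : P → ℕ → S} {c : P → 𝕜} (hm : ∀ q, Injective (m q))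
    (hsep : Pairwise fun q r => ∀ᶠ N in atTop, m q N ∉ range (m r)) (hc : ∀ q, c q ≠ 0) :
    LinearIndependent 𝕜 (restrictₗ 𝕜 p S ∘ fun q =>
      lp.single p (a q) 1 + c q • branchVec 𝕜 p fun n => (m q n : ι)) := by
  rw [linearIndependent_iff']
  intro F w hw q₀ hq₀
  set g : P → lp (fun _ : ι => 𝕜) p := fun q =>
    lp.single p (a q) 1 + c q • branchVec 𝕜 p fun n => (m q n : ι) with hg
  have hm' (q : P) : Injective fun n => (m q n : ι) := Subtype.val_injective.comp (hm q)
  obtain ⟨N, hNa, hNsep⟩ : ∃ N, (∀ q ∈ F, (m q₀ N : ι) ≠ a q) ∧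
      ∀ q ∈ F, q ≠ q₀ → m q₀ N ∉ range (m q) := by
    have hcof : Tendsto (fun n => (m q₀ n : ι)) atTop cofinite :=
      Nat.cofinite_eq_atTop ▸ (hm' q₀).tendsto_cofinite
    have hNa : ∀ᶠ N in atTop, ∀ q ∈ F, (m q₀ N : ι) ≠ a q :=
      (eventually_all_finset F).2 fun q _ => hcof.eventually (eventually_cofinite_ne (a q))
    have hNsep : ∀ᶠ N in atTop, ∀ q ∈ F, q ≠ q₀ → m q₀ N ∉ range (m q) := by
      refine (eventually_all_finset F).2 fun q _ => ?_
      rcases eq_or_ne q q₀ with rfl | hq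
      · exact Eventually.of_forall fun _ h => absurd rfl h
      · exact (hsep hq.symm).mono fun _ h _ => h
    exact (hNa.and hNsep).exists
  have hval := congrFun hw (m q₀ N)
  simp only [Finset.sum_apply, Pi.smul_apply, comp_apply, restrictₗ, LinearMap.pi_apply,
    lp.evalₗ_apply, smul_eq_mul, Pi.zero_apply] at hval
  have hother (q : P) (hq : q ∈ F) (hne : q ≠ q₀) : g q (m q₀ N) = 0 := by
    have hχ : (m q₀ N : ι) ∉ range fun n => (m q n : ι) :=
      fun ⟨n, hn⟩ => hNsep q hq hne ⟨n, Subtype.val_injective hn⟩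
    simp only [hg, lp.coeFn_add, lp.coeFn_smul, Pi.add_apply, Pi.smul_apply,
      lp.single_apply_ne p _ _ (hNa q hq), branchVec_apply_of_notMem_range hχ, smul_zero, add_zero]
  have hself : g q₀ (m q₀ N) = c q₀ * 2⁻¹ ^ N := by
    simp only [hg, lp.coeFn_add, lp.coeFn_smul, Pi.add_apply, Pi.smul_apply,
      lp.single_apply_ne p _ _ (hNa q₀ hq₀), branchVec_apply_self (hm' q₀), smul_eq_mul, zero_add]
  rw [Finset.sum_eq_single q₀ (fun q hq hne => by rw [hother q hq hne, mul_zero]) (absurd hq₀),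
    hself] at hval
  exact (mul_eq_zero.1 hval).resolve_right (mul_ne_zero (hc q₀) (pow_ne_zero _ (by norm_num)))

end Independence

section BranchNode

variable {α β : Type*}

def branchNode (code : List α ↪ β) (b : ℕ → α) (n : ℕ) : β :=
  code ((List.range n).map b)

lemma branchNode_eq_branchNode_iff {code : List α ↪ β} {b b' : ℕ → α} {N n : ℕ} :
    branchNode code b N = branchNode code b' n ↔ N = n ∧ ∀ k < N, b k = b' k := by
  rw [branchNode, branchNode, code.injective.eq_iff]
  constructor
  · intro h
    obtain rfl : N = n := by simpa using congrArg List.length h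
    exact ⟨rfl, fun k hk => by simpa [hk] using congrArg (·[k]?) h⟩
  · rintro ⟨rfl, h⟩
    exact List.map_congr_left fun k hk => h k (List.mem_range.1 hk)

lemma branchNode_injective (code : List α ↪ β) (b : ℕ → α) : Injective (branchNode code b) :=
  fun _ _ h => (branchNode_eq_branchNode_iff.1 h).1

lemma eventually_branchNode_notMem_range (code : List α ↪ β) {b b' : ℕ → α} (h : b ≠ b') :
    ∀ᶠ N in atTop, branchNode code b N ∉ range (branchNode code b') := by
  obtain ⟨k, hk⟩ := Function.ne_iff.1 h
  filter_upwards [eventually_gt_atTop k] with N hN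
  rintro ⟨n, hn⟩
  exact hk ((branchNode_eq_branchNode_iff.1 hn.symm).2 k hN)

end BranchNode

lemma le_mk_coordBelow {lam θ : Cardinal} (h : lam ≤ θ) : lam ≤ #{ξ // coordBelow θ lam ξ} := by
  have hord : lam.ord ≤ θ.ord := ord_le_ord.2 h
  let f (ξ : lam.ord.ToType) : {ξ // coordBelow θ lam ξ} :=
    ⟨Ordinal.ToType.mk (inclusion (Iio_subset_Iio hord) (Ordinal.ToType.mk.symm ξ)), by
      simpa [coordBelow] using mem_Iio.1 (Ordinal.ToType.mk.symm ξ).2⟩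
  have hf : Injective f := fun x y hxy =>
    Ordinal.ToType.mk.symm.injective (Subtype.ext (by simpa [f] using hxy))
  simpa using mk_le_of_injective hf

universe u in
lemma nonempty_prod_nat_embedding_of_mk_le_power {X S : Type u} [Infinite X] (h : #X ≤ #S ^ ℵ₀) :
    Nonempty (X × ℕ ↪ (ℕ → S)) := by
  rw [← Cardinal.le_def]
  simpa [mk_prod, ← power_def] using h

theorem stmt4_general (lam θ : Cardinal) (hlam : ℵ₀ ≤ lam) (hlt : lam < θ)
    (hpow : θ ≤ lam ^ ℵ₀) :
    ∃ K : Submodule ℂ (L2 θ), Dense (K : Set (L2 θ)) ∧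
      ∀ x ∈ K, (∀ ξ : θ.ord.ToType, coordBelow θ lam ξ → x ξ = 0) → x = 0 := by
  set S := {ξ : θ.ord.ToType | coordBelow θ lam ξ}
  have hS : lam ≤ #S := le_mk_coordBelow hlt.le
  have : Infinite S := infinite_iff.2 (hlam.trans hS)
  have : Infinite θ.ord.ToType := infinite_iff.2 (by simpa using hlam.trans hlt.le)
  obtain ⟨code⟩ : Nonempty (List S ↪ S) := (Cardinal.le_def _ _).1 (mk_list_eq_mk S).le
  obtain ⟨branch⟩ : Nonempty (θ.ord.ToType × ℕ ↪ (ℕ → S)) :=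
    nonempty_prod_nat_embedding_of_mk_le_power (by simpa using hpow.trans (power_le_power_right hS))
  set g : θ.ord.ToType × ℕ → L2 θ := fun q =>
    lp.single 2 q.1 1 + (2⁻¹ : ℂ) ^ q.2 • branchVec ℂ 2 fun n => (branchNode code (branch q) n).1
  have hclosure (ξ : θ.ord.ToType) : lp.single 2 ξ 1 ∈ closure (range g) :=
    mem_closure_of_tendsto (tendsto_add_geom_smul _ fun k => norm_branchVec_le _)
      (Eventually.of_forall fun k => mem_range_self (ξ, k))
  refine ⟨span ℂ (range g),
    lp.dense_span_of_forall_single_mem_closure ENNReal.ofNat_ne_top hclosure, fun x hx hvan => ?_⟩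
  have hind := linearIndependent_restrict_single_add_smul_branchVec (p := 2) (S := S) Prod.fst
    (m := fun q => branchNode code (branch q)) (c := fun q => (2⁻¹ : ℂ) ^ q.2)
    (fun q => branchNode_injective code _)
    (fun q r hqr => eventually_branchNode_notMem_range code (branch.injective.ne hqr))
    (fun q => pow_ne_zero _ (by norm_num))
  exact disjoint_def.1 (range_ker_disjoint hind) x hx (funext fun s => hvan s s.2)

/-- if `λ < θ` are infinite cardinals with `θ` regular and `λ^ℵ₀ ≥ θ`, then
there is a dense linear subspace `K` of `ℓ²(θ)` on which the projection `p_λ` onto the first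
`λ` coordinates has trivial kernel: the only `x ∈ K` vanishing on all coordinates `ξ < λ`
is `x = 0`. -/
theorem stmt4 (lam θ : Cardinal) (hlam : ℵ₀ ≤ lam) (hlt : lam < θ) (hreg : θ.IsRegular)
    (hpow : θ ≤ lam ^ ℵ₀) :
    ∃ K : Submodule ℂ (L2 θ), Dense (K : Set (L2 θ)) ∧
      ∀ x ∈ K, (∀ ξ : θ.ord.ToType, coordBelow θ lam ξ → x ξ = 0) → x = 0 :=
  stmt4_general lam θ hlam hlt hpow
end
end

section
/- Let λ < θ be infinite cardinals with θ regular and λ^ℵ₀ ≥ θ, and let (z_γ)_{γ<θ} be a family of vectors whose set of values is dense in ℓ²(θ). Then there exist vectors y_{γ,m} ∈ ℓ²(θ), for γ < θ and positive integers m, such that ‖y_{γ,m} − z_γ‖ ≤ 1/m for all γ and m, and the family of projections (p_λ(y_{γ,m}))_{γ<θ, m∈ℕ⁺} is linearly independent over ℂ. -/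
open Cardinal

noncomputable section

/-- The projection `p_λ` of `x ∈ ℓ²(θ)` to its coordinates `ξ < λ`, recorded as a plain
function on the coordinates below `λ` (the linear injection of `ℓ²(λ)` into functions makes
this faithful for linear-independence statements). -/
def restrictBelow (θ lam : Cardinal) (x : L2 θ) :
    {ξ : θ.ord.ToType // coordBelow θ lam ξ} → ℂ :=
  fun ξ => x ξ.1

/-!
Distinct branches of the tree of finite sequences of coordinates below `λ` share only finitely
many nodes, so the vectors carried by the `λ^ℵ₀ ≥ θ` branches (weight `2⁻ⁿ` at the `n`-th node)
have linearly independent projections `p_λ`. Hence no submodule of rank `< θ` contains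
`p_λ(ℓ²(θ))`, and its preimage under `p_λ` is a proper subspace, whose complement is dense.
Well-ordering the pairs `(γ, m)` in order type `θ`, each `y_{γ,m}` can then be chosen `1/m`-close to
`z_γ` with `p_λ(y_{γ,m})` outside the span of the fewer than `θ` earlier choices.
-/

open Set Submodule Filter Function
open scoped ENNReal

section LinearIndependence

variable {ι K M : Type*}

theorem linearIndependent_of_notMem_span_image_Iio [DivisionRing K] [AddCommGroup M] [Module K M]
    [LinearOrder ι] {v : ι → M} (h : ∀ i, v i ∉ span K (v '' Iio i)) :
    LinearIndependent K v := by
  classical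
  rw [← linearIndepOn_univ_iff, linearIndepOn_iff_linearIndepOn_finset]
  intro t _
  induction t using Finset.induction_on_max with
  | empty => simp
  | insert a s hlt ih =>
    rw [Finset.coe_insert, linearIndepOn_insert fun ha => (hlt a ha).false]
    exact ⟨ih (subset_univ _), fun hmem => h a (span_mono (image_mono hlt) hmem)⟩

theorem linearIndependent_of_forall_exists_separating {α : Type*} [Ring K] [NoZeroDivisors K]
    {v : ι → α → K} (h : ∀ (s : Finset ι), ∀ i ∈ s, ∃ a, v i a ≠ 0 ∧ ∀ j ∈ s, j ≠ i → v j a = 0) :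
    LinearIndependent K v := by
  classical
  rw [linearIndependent_iff']
  intro s c hc i hi
  obtain ⟨a, hia, hja⟩ := h s i hi
  have hca := congrFun hc a
  rw [Finset.sum_apply, Finset.sum_eq_single i (fun j hj hji => by simp [hja j hj hji])
    (absurd hi)] at hca
  simpa [hia] using hca

end LinearIndependence

theorem Memℓp.extend_zero {α β E : Type*} [NormedAddCommGroup E] {p : ℝ≥0∞} (hp : 0 < p.toReal)
    {b : β → α} (hb : Injective b) {g : β → E} (hg : Memℓp g p) :
    Memℓp (extend b g 0) p := by
  refine memℓp_gen ?_
  have hnorm :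
      (fun a => ‖extend b g 0 a‖ ^ p.toReal) = extend b (fun n => ‖g n‖ ^ p.toReal) 0 := by
    funext a
    rw [apply_extend (fun c : E => ‖c‖ ^ p.toReal)]
    congr 1
    funext a
    simp [Real.zero_rpow hp.ne']
  rw [hnorm, summable_extend_zero hb]
  exact hg.summable hp

theorem memℓp_two_inv_pow (𝕜 : Type*) [RCLike 𝕜] : Memℓp (fun n : ℕ => (2⁻¹ : 𝕜) ^ n) 2 := by
  refine memℓp_gen ?_
  simp only [norm_pow, norm_inv, RCLike.norm_ofNat, ENNReal.toReal_ofNat, Real.rpow_two]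
  simp_rw [← pow_mul, mul_comm _ 2, pow_mul]
  exact summable_geometric_of_lt_one (by positivity) (by norm_num)

section Branch

variable {α σ 𝕜 : Type*} [RCLike 𝕜]

theorem Stream'.take_injective (f : Stream' σ) : Injective (fun n => f.take n) := fun m n h => by
  simpa only [Stream'.length_take] using congrArg List.length h

theorem Stream'.eventually_take_ne (s : Finset (Stream' σ)) (f : Stream' σ) :
    ∀ᶠ n in atTop, ∀ g ∈ s, g ≠ f → g.take n ≠ f.take n := by
  refine (eventually_all_finset s).2 fun g _ => ?_
  by_cases hgf : g = f
  · exact Eventually.of_forall fun _ h => absurd hgf h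
  obtain ⟨k, hk⟩ : ∃ k, g.take k ≠ f.take k := by
    by_contra! h
    exact hgf (Stream'.take_theorem g f h)
  filter_upwards [eventually_ge_atTop k] with n hkn _ h
  apply hk
  rw [← min_eq_right hkn, ← Stream'.take_take, ← Stream'.take_take, h]

def branchVector (j : List σ → α) (f : Stream' σ) : α → 𝕜 :=
  extend (fun n => j (f.take n)) (fun n => (2⁻¹ : 𝕜) ^ n) 0

variable {j : List σ → α} (hj : Injective j)
include hj

theorem memℓp_branchVector (f : Stream' σ) : Memℓp (branchVector (𝕜 := 𝕜) j f) 2 :=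
  (memℓp_two_inv_pow 𝕜).extend_zero (by norm_num) (hj.comp f.take_injective)

theorem branchVector_apply_take (f : Stream' σ) (n : ℕ) :
    branchVector (𝕜 := 𝕜) j f (j (f.take n)) = 2⁻¹ ^ n :=
  (hj.comp f.take_injective).extend_apply _ _ n

theorem branchVector_apply_take_of_ne {f g : Stream' σ} {n : ℕ} (h : g.take n ≠ f.take n) :
    branchVector (𝕜 := 𝕜) j g (j (f.take n)) = 0 := by
  refine extend_apply' _ _ _ fun ⟨m, hm⟩ => h ?_
  have hmn := hj hm
  obtain rfl : m = n := by simpa only [Stream'.length_take] using congrArg List.length hmn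
  exact hmn

theorem linearIndependent_branchVector_comp {β : Type*} {r : β → α} (hr : range j ⊆ range r) :
    LinearIndependent 𝕜 (fun f => branchVector (𝕜 := 𝕜) j f ∘ r) := by
  refine linearIndependent_of_forall_exists_separating fun t f _ => ?_
  obtain ⟨n, hn⟩ := (Stream'.eventually_take_ne t f).exists
  obtain ⟨b, hb⟩ := hr (mem_range_self (f.take n))
  refine ⟨b, ?_, fun g hg hgf => ?_⟩
  · simp [hb, branchVector_apply_take hj]
  · simp [hb, branchVector_apply_take_of_ne hj (hn g hg hgf)]

end Branch

section Transfinite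

variable {K : Type*} [DivisionRing K]

theorem LinearIndependent.exists_notMem_of_rank_lt {ι M : Type u} [AddCommGroup M] [Module K M]
    {v : ι → M} (hv : LinearIndependent K v) {W : Submodule K M} (hW : Module.rank K W < #ι) :
    ∃ i, v i ∉ W := by
  by_contra! h
  have hvW : LinearIndependent K fun i => (⟨v i, h i⟩ : W) := .of_comp W.subtype hv
  exact hW.not_ge hvW.cardinal_le_rank

theorem exists_linearIndependent_comp_of_forall_rank_lt {I M : Type u} {E : Type*}
    [LinearOrder I] [WellFoundedLT I] [AddCommGroup M] [Module K M] {κ : Cardinal.{u}}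
    (hI : ∀ i : I, #(Iio i) < κ) (R : E → M) (A : I → Set E)
    (hA : ∀ i (W : Submodule K M), Module.rank K W < κ → ∃ y ∈ A i, R y ∉ W) :
    ∃ y : I → E, (∀ i, y i ∈ A i) ∧ LinearIndependent K (R ∘ y) := by
  have step (i : I) (prev : ∀ j < i, E) :
      ∃ y ∈ A i, R y ∉ span K (range fun j : Iio i => R (prev j j.2)) :=
    hA i _ ((rank_span_le _).trans_lt (mk_range_le.trans_lt (hI i)))
  choose next hnextA hnext using step
  obtain ⟨y, hy⟩ : ∃ y : I → E, ∀ i, y i = next i fun j _ => y j :=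
    ⟨WellFoundedLT.fix next, WellFoundedLT.fix_eq next⟩
  refine ⟨y, fun i => ?_, linearIndependent_of_notMem_span_image_Iio fun i => ?_⟩
  · rw [hy]
    exact hnextA _ _
  · have h := hnext i fun j _ => y j
    rw [← hy] at h
    rwa [image_eq_range]

end Transfinite

theorem dense_setOf_apply_notMem {𝕜 E M : Type*} [NontriviallyNormedField 𝕜]
    [NormedAddCommGroup E] [NormedSpace 𝕜 E] [AddCommGroup M] [Module 𝕜 M] (R : E →ₗ[𝕜] M)
    {W : Submodule 𝕜 M} (h : ∃ x, R x ∉ W) : Dense {y | R y ∉ W} := by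
  have hne : W.comap R ≠ ⊤ := fun htop => h.elim fun x hx => hx (htop ▸ mem_top : x ∈ W.comap R)
  refine interior_eq_empty_iff_dense_compl.1 (not_nonempty_iff_eq_empty.1 fun hint => ?_)
  exact hne ((W.comap R).eq_top_of_nonempty_interior' hint)

theorem mk_coordBelow {θ lam : Cardinal} (h : lam ≤ θ) :
    #{ξ : θ.ord.ToType // coordBelow θ lam ξ} = lam := by
  have e : {ξ : θ.ord.ToType // coordBelow θ lam ξ} ≃ lam.ord.ToType :=
    ((Ordinal.ToType.mk.symm.toEquiv.subtypeEquiv fun _ => Iff.rfl).trans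
      (Equiv.subtypeSubtypeEquivSubtype fun h' => h'.trans_le (ord_le_ord.2 h))).trans
      Ordinal.ToType.mk.toEquiv
  rw [mk_congr e, mk_ord_toType]

def restrictBelowₗ (θ lam : Cardinal) :
    L2 θ →ₗ[ℂ] ({ξ : θ.ord.ToType // coordBelow θ lam ξ} → ℂ) :=
  LinearMap.pi fun ξ => lp.evalₗ (fun _ => ℂ) 2 ξ.1

theorem exists_mem_closedBall_restrictBelowₗ_notMem {lam θ : Cardinal} (hlam : ℵ₀ ≤ lam)
    (hlt : lam < θ) (hpow : θ ≤ lam ^ ℵ₀) (x : L2 θ) {r : ℝ} (hr : 0 < r)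
    {W : Submodule ℂ ({ξ : θ.ord.ToType // coordBelow θ lam ξ} → ℂ)}
    (hW : Module.rank ℂ W < θ) :
    ∃ y ∈ Metric.closedBall x r, restrictBelowₗ θ lam y ∉ W := by
  set S := {ξ : θ.ord.ToType // coordBelow θ lam ξ}
  have hS : #S = lam := mk_coordBelow hlt.le
  have : Infinite S := infinite_iff.2 (hS ▸ hlam)
  obtain ⟨ι⟩ : Nonempty (List S ↪ S) := ⟨(Cardinal.eq.1 (mk_list_eq_mk S)).some.toEmbedding⟩
  have hj : Injective fun u => (ι u).1 := Subtype.val_injective.comp ι.injective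
  let X : Stream' S → L2 θ := fun f => ⟨branchVector _ f, memℓp_branchVector hj f⟩
  have hX : LinearIndependent ℂ (fun f => restrictBelowₗ θ lam (X f)) :=
    linearIndependent_branchVector_comp (𝕜 := ℂ) hj (r := Subtype.val)
      (range_comp_subset_range _ _)
  have hXcard : θ ≤ #(Stream' S) := by simpa [Stream', hS] using hpow
  obtain ⟨f, hf⟩ := hX.exists_notMem_of_rank_lt (hW.trans_le hXcard)
  obtain ⟨y, hy, hyW⟩ := Metric.dense_iff.1 (dense_setOf_apply_notMem _ ⟨_, hf⟩) x r hr
  exact ⟨y, Metric.ball_subset_closedBall hy, hyW⟩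

theorem stmt6_general (lam θ : Cardinal) (hlam : ℵ₀ ≤ lam) (hlt : lam < θ)
    (hpow : θ ≤ lam ^ ℵ₀)
    (z : θ.ord.ToType → L2 θ) :
    ∃ y : θ.ord.ToType → ℕ+ → L2 θ,
      (∀ γ (m : ℕ+), ‖y γ m - z γ‖ ≤ 1 / (m : ℝ)) ∧
      LinearIndependent ℂ
        (fun gm : θ.ord.ToType × ℕ+ => restrictBelow θ lam (y gm.1 gm.2)) := by
  obtain ⟨e⟩ : Nonempty (θ.ord.ToType × ℕ+ ≃ θ.ord.ToType) :=
    Cardinal.eq.1 (by simp [mul_aleph0_eq (hlam.trans hlt.le)])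
  obtain ⟨y, hy, hli⟩ := exists_linearIndependent_comp_of_forall_rank_lt (K := ℂ)
    (fun i => by simpa using mk_Iio_lt i) (restrictBelowₗ θ lam)
    (fun i => Metric.closedBall (z (e.symm i).1) (1 / (e.symm i).2))
    fun i _ hW => exists_mem_closedBall_restrictBelowₗ_notMem hlam hlt hpow _ (by positivity) hW
  refine ⟨fun γ m => y (e (γ, m)), fun γ m => ?_, hli.comp e e.injective⟩
  simpa [dist_eq_norm] using hy (e (γ, m))

/-- if `λ < θ` are infinite cardinals with `θ` regular and `λ^ℵ₀ ≥ θ`, and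
`(z_γ)_{γ<θ}` has dense range in `ℓ²(θ)`, then there are vectors `y_{γ,m}` with
`‖y_{γ,m} - z_γ‖ ≤ 1/m` such that the projections `p_λ(y_{γ,m})`, for `γ < θ` and `m ∈ ℕ⁺`,
are linearly independent over `ℂ`. -/
theorem stmt6 (lam θ : Cardinal) (hlam : ℵ₀ ≤ lam) (hlt : lam < θ) (hreg : θ.IsRegular)
    (hpow : θ ≤ lam ^ ℵ₀)
    (z : θ.ord.ToType → L2 θ) (hz : DenseRange z) :
    ∃ y : θ.ord.ToType → ℕ+ → L2 θ,
      (∀ γ (m : ℕ+), ‖y γ m - z γ‖ ≤ 1 / (m : ℝ)) ∧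
      LinearIndependent ℂ
        (fun gm : θ.ord.ToType × ℕ+ => restrictBelow θ lam (y gm.1 gm.2)) :=
  stmt6_general lam θ hlam hlt hpow z
end
end

section
/- Let θ be an uncountable cardinal with θ ≤ 2^ℵ₀. Then there exists a dense linear subspace K of ℓ²(θ) such that the restriction to K of the projection p_{ℵ₀} onto the first ℵ₀ coordinates is injective; consequently K contains no uncountable orthonormal family, and in particular no orthonormal basis of ℓ²(θ). -/
open Cardinal

noncomputable section

/-!
Enumerate the first `ω` coordinates as `b n` and choose distinct `t ξ ∈ (0, 1)`, which is possible
since `θ ≤ 𝔠`. Let `K` be spanned by the unit vectors `e_{b n}` and by `e_ξ + ∑ₙ t_ξⁿ e_{b n}` for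
the remaining `ξ`. Its closure contains every `e_ξ`, so `K` is dense. If `x ∈ K` vanishes on the
first `ω` coordinates, then for large `n` the coordinate `x (b n)` is a power sum `∑ c_ξ t_ξⁿ` over
the finitely many perturbed generators involved, and a Vandermonde argument kills every `c_ξ`.
So each nonzero vector of `K` is nonzero at some `b n`; by Bessel's inequality only countably many
members of an orthonormal family can be, hence orthonormal families in `K` are countable. A
countable Hilbert basis of `ℓ²(θ)` would make its standard basis countable.
-/

open Filter Function
open scoped lp InnerProductSpace

theorem Finset.eq_zero_of_eventually_sum_mul_pow_eq_zero {α R : Type*} [CommRing R] [IsDomain R]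
    {s : Finset α} {t c : α → R} (ht : Set.InjOn t s) (ht0 : ∀ a ∈ s, t a ≠ 0)
    (h : ∀ᶠ n in atTop, ∑ a ∈ s, c a * t a ^ n = 0) : ∀ a ∈ s, c a = 0 := by
  obtain ⟨N, hN⟩ := h.exists_forall_of_atTop
  let σ := s.equivFin.symm
  have hv : (fun j => c (σ j) * t (σ j) ^ N) = 0 := by
    refine Matrix.eq_zero_of_forall_pow_sum_mul_pow_eq_zero (f := fun j => t (σ j)) ?_ fun i => ?_
    · exact fun i j hij => σ.injective (Subtype.ext (ht (σ i).2 (σ j).2 hij))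
    · rw [← hN (N + i) (by omega), ← s.sum_coe_sort, ← σ.sum_comp]
      simp [pow_add, mul_assoc]
  intro a ha
  simpa [σ, ht0 a ha] using congr_fun hv (σ.symm ⟨a, ha⟩)

section Orthonormal

variable {𝕜 E ι κ : Type*} [RCLike 𝕜] [NormedAddCommGroup E] [InnerProductSpace 𝕜 E]

theorem Orthonormal.countable_of_forall_exists_inner_ne_zero {v : ι → E} (hv : Orthonormal 𝕜 v)
    [Countable κ] (x : κ → E) (h : ∀ i, ∃ k, ⟪v i, x k⟫_𝕜 ≠ 0) : Countable ι := by
  have hk : ∀ k, {i | ⟪v i, x k⟫_𝕜 ≠ 0}.Countable := fun k =>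
    (hv.inner_products_summable (x := x k)).countable_support.mono fun i hi => by simpa using hi
  rw [← Set.countable_univ_iff]
  exact (Set.countable_iUnion hk).mono fun i _ => Set.mem_iUnion.mpr (h i)

theorem HilbertBasis.countable_of_orthonormal [CompleteSpace E] [Countable κ]
    (b : HilbertBasis κ 𝕜 E) {v : ι → E} (hv : Orthonormal 𝕜 v) : Countable ι := by
  refine hv.countable_of_forall_exists_inner_ne_zero b fun i => ?_
  by_contra! h
  refine hv.ne_zero i (b.repr.injective ?_)
  ext k
  simp [b.repr_apply_apply, inner_eq_zero_symm.mp (h k)]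

end Orthonormal

section lp

variable {𝕜 I : Type*} [RCLike 𝕜]

theorem lp.finsupp_sum_smul_apply {ι : Type*} (c : ι →₀ 𝕜) (v : ι → ℓ²(I, 𝕜))
    (j : I) : (c.sum fun i a => a • v i) j = ∑ i ∈ c.support, c i * v i j := by
  rw [Finsupp.sum, lp.coeFn_sum, Finset.sum_apply]
  simp

variable [DecidableEq I]

theorem lp.mem_of_forall_single_mem {E : I → Type*} [∀ i, NormedAddCommGroup (E i)]
    [∀ i, NormedSpace 𝕜 (E i)] {p : ENNReal} [Fact (1 ≤ p)] (hp : p ≠ ⊤)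
    {M : Submodule 𝕜 (lp E p)} (hM : IsClosed (M : Set (lp E p))) {x : lp E p}
    (h : ∀ i, lp.single p i (x i) ∈ M) : x ∈ M :=
  hM.mem_of_tendsto (lp.hasSum_single hp x) (Eventually.of_forall fun _ => M.sum_mem fun i _ => h i)

theorem lp.dense_of_single_mem_topologicalClosure {K : Submodule 𝕜 ℓ²(I, 𝕜)}
    (h : ∀ i, lp.single 2 i (1 : 𝕜) ∈ K.topologicalClosure) : Dense (K : Set ℓ²(I, 𝕜)) := by
  let e : HilbertBasis I 𝕜 ℓ²(I, 𝕜) := default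
  have he : ∀ i, e i = lp.single 2 i 1 := fun i => (e.repr_symm_single i).symm
  rw [Submodule.dense_iff_topologicalClosure_eq_top, eq_top_iff, ← e.dense_span]
  refine Submodule.topologicalClosure_minimal _ ?_ K.isClosed_topologicalClosure
  exact Submodule.span_le.mpr (Set.range_subset_iff.mpr fun i => he i ▸ h i)

theorem Orthonormal.countable_of_eq_zero_of_forall_apply_eq_zero {ι κ : Type*} [Countable κ]
    {K : Submodule 𝕜 ℓ²(I, 𝕜)} {b : κ → I} (hK : ∀ x ∈ K, (∀ k, x (b k) = 0) → x = 0)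
    {v : ι → ℓ²(I, 𝕜)} (hv : Orthonormal 𝕜 v) (hvK : ∀ i, v i ∈ K) : Countable ι := by
  refine hv.countable_of_forall_exists_inner_ne_zero (fun k => lp.single 2 (b k) (1 : 𝕜))
    fun i => ?_
  by_contra! h
  exact hv.ne_zero i (hK _ (hvK i) fun k => by simpa [lp.inner_single_right] using h k)

end lp

section Perturbation

variable {I : Type*} {b : ℕ → I}

theorem memℓp_extend_pow (hb : Injective b) {z : ℂ} (hz : ‖z‖ < 1) :
    Memℓp (extend b (z ^ ·) 0) 2 := by
  refine memℓp_gen ?_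
  have hvanish : ∀ i ∉ Set.range b, ‖extend b (z ^ ·) 0 i‖ ^ (2 : ENNReal).toReal = 0 :=
    fun i hi => by simp [extend_apply' _ _ _ fun h => hi h]
  rw [← hb.summable_iff hvanish]
  have hgeom : Summable fun n : ℕ => (‖z‖ ^ 2) ^ n :=
    summable_geometric_of_lt_one (by positivity) (by nlinarith [norm_nonneg z])
  refine hgeom.congr fun n => ?_
  simp [hb.extend_apply, ← pow_mul, mul_comm]

def geomVec (hb : Injective b) {z : ℂ} (hz : ‖z‖ < 1) : ℓ²(I, ℂ) :=
  ⟨extend b (z ^ ·) 0, memℓp_extend_pow hb hz⟩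

theorem geomVec_apply_self (hb : Injective b) {z : ℂ} (hz : ‖z‖ < 1) (n : ℕ) :
    geomVec hb hz (b n) = z ^ n :=
  hb.extend_apply _ _ n

theorem geomVec_apply_of_notMem_range (hb : Injective b) {z : ℂ} (hz : ‖z‖ < 1) {i : I}
    (hi : i ∉ Set.range b) : geomVec hb hz i = 0 :=
  extend_apply' _ _ _ fun h => hi h

variable [DecidableEq I]

open Classical in
def perturbedVec (hb : Injective b) (t : I → ℂ) (ht : ∀ i, ‖t i‖ < 1) (i : I) : ℓ²(I, ℂ) :=
  if i ∈ Set.range b then lp.single 2 i 1 else lp.single 2 i 1 + geomVec hb (ht i)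

def perturbedSpan (hb : Injective b) (t : I → ℂ) (ht : ∀ i, ‖t i‖ < 1) : Submodule ℂ ℓ²(I, ℂ) :=
  Submodule.span ℂ (Set.range (perturbedVec hb t ht))

variable {t : I → ℂ} {ht : ∀ i, ‖t i‖ < 1}

theorem perturbedVec_of_mem_range (hb : Injective b) {i : I} (hi : i ∈ Set.range b) :
    perturbedVec hb t ht i = lp.single 2 i 1 :=
  if_pos hi

theorem perturbedVec_of_notMem_range (hb : Injective b) {i : I} (hi : i ∉ Set.range b) :
    perturbedVec hb t ht i = lp.single 2 i 1 + geomVec hb (ht i) :=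
  if_neg hi

theorem perturbedVec_apply_of_notMem_range (hb : Injective b) (i : I) {j : I}
    (hj : j ∉ Set.range b) : perturbedVec hb t ht i j = Pi.single (M := fun _ => ℂ) i 1 j := by
  by_cases hi : i ∈ Set.range b
  · simp [perturbedVec_of_mem_range hb hi]
  · simp [perturbedVec_of_notMem_range hb hi, geomVec_apply_of_notMem_range hb _ hj]

theorem perturbedVec_apply_of_mem_range_of_ne (hb : Injective b) {i : I} (hi : i ∈ Set.range b)
    {n : ℕ} (hin : i ≠ b n) : perturbedVec hb t ht i (b n) = 0 := by
  simp [perturbedVec_of_mem_range hb hi, hin.symm]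

theorem perturbedVec_apply_of_notMem_range_self (hb : Injective b) {i : I}
    (hi : i ∉ Set.range b) (n : ℕ) : perturbedVec hb t ht i (b n) = t i ^ n := by
  have hin : b n ≠ i := fun h => hi ⟨n, h⟩
  simp [perturbedVec_of_notMem_range hb hi, hin, geomVec_apply_self]

theorem eq_zero_of_mem_perturbedSpan (hb : Injective b) (ht_inj : Injective t)
    (ht0 : ∀ i, t i ≠ 0) {x : ℓ²(I, ℂ)} (hx : x ∈ perturbedSpan hb t ht)
    (hx0 : ∀ n, x (b n) = 0) : x = 0 := by
  classical
  obtain ⟨c, rfl⟩ := Finsupp.mem_span_range_iff_exists_finsupp.mp hx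
  set s := c.support.filter (· ∉ Set.range b)
  have hfar : ∀ᶠ n in atTop, b n ∉ c.support := by
    rw [← Nat.cofinite_eq_atTop]
    exact (c.support.finite_toSet.preimage hb.injOn).eventually_cofinite_notMem
  have hpow : ∀ᶠ n in atTop, ∑ i ∈ s, c i * t i ^ n = 0 := hfar.mono fun n hn => by
    rw [← hx0 n, lp.finsupp_sum_smul_apply, Finset.sum_filter]
    refine Finset.sum_congr rfl fun i hi => ?_
    split_ifs with h
    · rw [perturbedVec_apply_of_mem_range_of_ne hb h (ne_of_mem_of_not_mem hi hn), mul_zero]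
    · rw [perturbedVec_apply_of_notMem_range_self hb h]
  have hc : ∀ i ∈ s, c i = 0 :=
    s.eq_zero_of_eventually_sum_mul_pow_eq_zero ht_inj.injOn (fun i _ => ht0 i) hpow
  ext j
  by_cases hj : j ∈ Set.range b
  · obtain ⟨n, rfl⟩ := hj
    exact hx0 n
  · have hcj : c j = 0 := by
      by_contra hcj
      exact hcj (hc j (Finset.mem_filter.mpr ⟨Finsupp.mem_support_iff.mpr hcj, hj⟩))
    simp [lp.finsupp_sum_smul_apply, perturbedVec_apply_of_notMem_range hb _ hj, Pi.single_apply,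
      hcj]

theorem dense_perturbedSpan (hb : Injective b) : Dense (perturbedSpan hb t ht : Set ℓ²(I, ℂ)) := by
  set K := perturbedSpan hb t ht
  have hsingle : ∀ n, lp.single 2 (b n) (1 : ℂ) ∈ K := fun n =>
    perturbedVec_of_mem_range (t := t) (ht := ht) hb ⟨n, rfl⟩ ▸ Submodule.subset_span ⟨b n, rfl⟩
  have hgeom : ∀ {z : ℂ} (hz : ‖z‖ < 1), geomVec hb hz ∈ K.topologicalClosure := by
    refine fun hz => lp.mem_of_forall_single_mem ENNReal.ofNat_ne_top K.isClosed_topologicalClosure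
      fun j => ?_
    by_cases hj : j ∈ Set.range b
    · obtain ⟨n, rfl⟩ := hj
      rw [← mul_one (geomVec hb hz (b n)), ← smul_eq_mul, lp.single_smul]
      exact K.topologicalClosure.smul_mem _ (K.le_topologicalClosure (hsingle n))
    · rw [geomVec_apply_of_notMem_range hb hz hj, lp.single_zero]
      exact K.topologicalClosure.zero_mem
  refine lp.dense_of_single_mem_topologicalClosure fun i => ?_
  have hmem : perturbedVec hb t ht i ∈ K.topologicalClosure :=
    K.le_topologicalClosure (Submodule.subset_span ⟨i, rfl⟩)
  by_cases hi : i ∈ Set.range b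
  · rwa [perturbedVec_of_mem_range hb hi] at hmem
  · rw [perturbedVec_of_notMem_range hb hi] at hmem
    simpa using K.topologicalClosure.sub_mem hmem (hgeom (ht i))

end Perturbation

theorem exists_injective_ne_zero_norm_lt_one {I : Type} (h : #I ≤ 𝔠) :
    ∃ t : I → ℂ, Injective t ∧ (∀ i, t i ≠ 0) ∧ ∀ i, ‖t i‖ < 1 := by
  obtain ⟨f⟩ : Nonempty (I ↪ Set.Ioo (0 : ℝ) 1) := by
    rwa [← Cardinal.le_def, Cardinal.mk_Ioo_real zero_lt_one]
  refine ⟨fun i => ((f i : ℝ) : ℂ), ?_, fun i => ?_, fun i => ?_⟩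
  · exact Complex.ofReal_injective.comp (Subtype.val_injective.comp f.injective)
  · exact Complex.ofReal_ne_zero.mpr (f i).2.1.ne'
  · rw [Complex.norm_real, Real.norm_of_nonneg (f i).2.1.le]
    exact (f i).2.2

section FirstCoordinates

variable {θ : Cardinal}

theorem natCast_lt_ord (hθ : ℵ₀ ≤ θ) (n : ℕ) : (n : Ordinal) < θ.ord :=
  (Ordinal.natCast_lt_omega0 n).trans_le (by rwa [← Cardinal.ord_aleph0, Cardinal.ord_le_ord])

def natCoord (hθ : ℵ₀ ≤ θ) (n : ℕ) : θ.ord.ToType := Ordinal.ToType.mk ⟨n, natCast_lt_ord hθ n⟩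

theorem natCoord_injective (hθ : ℵ₀ ≤ θ) : Injective (natCoord hθ) := fun m n h => by
  simpa using congrArg Subtype.val ((Ordinal.ToType.mk (o := θ.ord)).injective h)

theorem coordBelow_natCoord (hθ : ℵ₀ ≤ θ) (n : ℕ) : coordBelow θ ℵ₀ (natCoord hθ n) := by
  simp [coordBelow, natCoord, Ordinal.natCast_lt_omega0]

end FirstCoordinates

/-- if `θ` is uncountable and `θ ≤ 2^ℵ₀`, then there is a dense linear subspace
`K` of `ℓ²(θ)` on which the projection onto the first `ℵ₀` coordinates is injective;
consequently `K` contains no uncountable orthonormal family, and in particular no orthonormal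
basis of `ℓ²(θ)`. -/
theorem stmt10 (θ : Cardinal) (h1 : ℵ₀ < θ) (h2 : θ ≤ 2 ^ ℵ₀) :
    ∃ K : Submodule ℂ (L2 θ), Dense (K : Set (L2 θ)) ∧
      (∀ x ∈ K, (∀ ξ : θ.ord.ToType, coordBelow θ ℵ₀ ξ → x ξ = 0) → x = 0) ∧
      (∀ (ι : Type) (v : ι → L2 θ), Orthonormal ℂ v → (∀ i, v i ∈ K) → #ι ≤ ℵ₀) ∧
      ¬ ∃ S : Set (L2 θ), S ⊆ (K : Set (L2 θ)) ∧
          Orthonormal ℂ (fun s : S => (s : L2 θ)) ∧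
          (Submodule.span ℂ S).topologicalClosure = ⊤ := by
  have hcard : #θ.ord.ToType = θ := by simp
  obtain ⟨t, ht_inj, ht0, ht1⟩ :=
    exists_injective_ne_zero_norm_lt_one (hcard.trans_le (h2.trans_eq Cardinal.two_power_aleph0))
  have hb := natCoord_injective h1.le
  let K := perturbedSpan hb t ht1
  have hK : ∀ x ∈ K, (∀ n, x (natCoord h1.le n) = 0) → x = 0 :=
    fun x hx => eq_zero_of_mem_perturbedSpan hb ht_inj ht0 hx
  have hcount : ∀ (ι : Type) (v : ι → L2 θ), Orthonormal ℂ v → (∀ i, v i ∈ K) → #ι ≤ ℵ₀ :=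
    fun ι v hv hvK => mk_le_aleph0_iff.mpr (hv.countable_of_eq_zero_of_forall_apply_eq_zero hK hvK)
  refine ⟨K, dense_perturbedSpan hb, fun x hx hx0 => hK x hx fun n => hx0 _
    (coordBelow_natCoord h1.le n), hcount, ?_⟩
  rintro ⟨S, hSK, hS, hStop⟩
  have : Countable S := mk_le_aleph0_iff.mp (hcount S _ hS fun s => hSK s.2)
  have hbasis : ⊤ ≤ (Submodule.span ℂ (Set.range ((↑) : S → L2 θ))).topologicalClosure := by
    rw [Subtype.range_coe, hStop]
  have : Countable θ.ord.ToType := (HilbertBasis.mk hS hbasis).countable_of_orthonormal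
    (default : HilbertBasis _ ℂ (L2 θ)).orthonormal
  exact h1.not_ge (hcard ▸ mk_le_aleph0_iff.mpr this)
end
end

section
/- Let θ be an uncountable regular cardinal such that λ^ℵ₀ < θ for every cardinal λ < θ. Then every linear subspace Y of any complex Hilbert space with cardinality #Y = θ contains an orthonormal family of cardinality θ. -/
/-!
Take a maximal orthonormal set `S` in `Y` and let `K` be the closed linear span of `S` in `H`.
If `#S < θ`, then `#K ≤ (max #S 𝔠) ^ ℵ₀ < θ`, since every point of `K` is the limit of a sequence
in the span and the span is an image of `S →₀ ℂ`. By maximality, `Y` meets `Kᗮ` only in `0`, so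
the orthogonal projection onto `K` is injective on `Y`, and `θ = #Y ≤ #K < θ`.
-/

open Cardinal

universe u

namespace Submodule

theorem cardinalMk_span_le_max {R M : Type u} [Semiring R] [Infinite R] [AddCommMonoid M]
    [Module R M] (s : Set M) : #(span R s) ≤ max #s #R := by
  rcases s.eq_empty_or_nonempty with rfl | hs
  · simpa using (one_lt_aleph0.trans_le (aleph0_le_mk R)).le
  have := hs.to_subtype
  calc #(span R s) = #(LinearMap.range (Finsupp.linearCombination R ((↑) : s → M))) := by
        rw [Finsupp.range_linearCombination, Subtype.range_coe]
    _ ≤ #(s →₀ R) := mk_range_le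
    _ = max #s #R := mk_finsupp_of_infinite' _ _

variable {𝕜 E : Type*} [RCLike 𝕜] [NormedAddCommGroup E] [InnerProductSpace 𝕜 E]

theorem cardinalMk_le_of_disjoint_orthogonal {K Y : Submodule 𝕜 E} [K.HasOrthogonalProjection]
    (h : Disjoint Y Kᗮ) : #Y ≤ #K := by
  refine mk_le_of_injective (f := K.orthogonalProjectionOnto.toLinearMap ∘ₗ Y.subtype) ?_
  rwa [← LinearMap.ker_eq_bot, LinearMap.ker_comp, ker_orthogonalProjectionOnto,
    ← disjoint_iff_comap_eq_bot]

theorem comap_subtype_orthogonal_span_image (Y : Submodule 𝕜 E) (S : Set Y) :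
    (span 𝕜 (Y.subtype '' S))ᗮ.comap Y.subtype = (span 𝕜 S)ᗮ := by
  ext v
  rw [mem_comap, span_image]
  simp [mem_orthogonal]

end Submodule

theorem cardinalMk_closure_le_pow_aleph0 {X : Type*} [TopologicalSpace X]
    [FrechetUrysohnSpace X] [T2Space X] (s : Set X) : #(closure s) ≤ #s ^ ℵ₀ := by
  have hseq (x : closure s) :
      ∃ u : ℕ → s, Filter.Tendsto (fun n => (u n : X)) Filter.atTop (nhds x) := by
    obtain ⟨u, hus, hu⟩ := mem_closure_iff_seq_limit.1 x.2
    exact ⟨fun n => ⟨u n, hus n⟩, hu⟩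
  choose u hu using hseq
  have hinj : Function.Injective u := fun x y hxy =>
    Subtype.ext (tendsto_nhds_unique (hu x) (hxy ▸ hu y))
  simpa using mk_le_of_injective hinj

theorem stmt12_general (θ : Cardinal) (hunc : ℵ₀ < θ)
    (hpow : ∀ lam < θ, lam ^ ℵ₀ < θ)
    {H : Type} [NormedAddCommGroup H] [InnerProductSpace ℂ H] [CompleteSpace H]
    (Y : Submodule ℂ H) (hY : #Y = θ) :
    ∃ S : Set H, S ⊆ (Y : Set H) ∧ Orthonormal ℂ (fun s : S => (s : H)) ∧ #S = θ := by
  obtain ⟨S, -, hS, hmax⟩ := exists_maximal_orthonormal (𝕜 := ℂ) (E := Y) (orthonormal_empty _ _)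
  rw [maximal_orthonormal_iff_orthogonalComplement_eq_bot hS] at hmax
  have hcont : #ℂ < θ := by
    simpa [mk_complex, ← two_power_aleph0] using
      (power_le_power_right (natCast_lt_aleph0 (n := 2)).le).trans_lt (hpow ℵ₀ hunc)
  set T := Y.subtype '' S
  have hdisj : Disjoint Y (Submodule.span ℂ T).topologicalClosureᗮ := by
    rw [Submodule.orthogonal_closure, Submodule.disjoint_iff_comap_eq_bot,
      Submodule.comap_subtype_orthogonal_span_image, hmax]
  have hT : #T = #S := mk_image_eq Y.injective_subtype
  refine ⟨T, Set.image_subset_iff.2 fun y _ => y.2, ?_, hT.trans ?_⟩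
  · have := (hS.comp_linearIsometry Y.subtypeₗᵢ).toSubtypeRange
    rwa [Set.range_comp, Subtype.range_coe] at this
  refine le_antisymm (hY ▸ mk_set_le S) (not_lt.1 fun hlt => hY.not_lt ?_)
  have hspan : #(Submodule.span ℂ T) < θ :=
    (Submodule.cardinalMk_span_le_max T).trans_lt (max_lt (hT ▸ hlt) hcont)
  calc #Y ≤ #(Submodule.span ℂ T).topologicalClosure :=
        Submodule.cardinalMk_le_of_disjoint_orthogonal hdisj
    _ ≤ #(Submodule.span ℂ T) ^ ℵ₀ := cardinalMk_closure_le_pow_aleph0 _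
    _ < θ := hpow _ hspan

/-- if `θ` is an uncountable regular cardinal with `λ^ℵ₀ < θ` for every
`λ < θ`, then every linear subspace `Y` of any complex Hilbert space with `#Y = θ` contains
an orthonormal family of cardinality `θ`. -/
theorem stmt12 (θ : Cardinal) (hreg : θ.IsRegular) (hunc : ℵ₀ < θ)
    (hpow : ∀ lam < θ, lam ^ ℵ₀ < θ)
    {H : Type} [NormedAddCommGroup H] [InnerProductSpace ℂ H] [CompleteSpace H]
    (Y : Submodule ℂ H) (hY : #Y = θ) :
    ∃ S : Set H, S ⊆ (Y : Set H) ∧ Orthonormal ℂ (fun s : S => (s : H)) ∧ #S = θ :=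
  stmt12_general θ hunc hpow Y hY
end

section
/- Let θ be a regular cardinal with 2^ℵ₀ ≤ θ, and suppose there exists an infinite cardinal λ < θ with λ^ℵ₀ ≥ θ. Then there exists a linear subspace Y of ℓ²(θ) with cardinality #Y = θ that contains no orthonormal family of cardinality θ. -/
/-!
Fix `A ⊆ θ` with `#A = λ`. The vectors `∑ₙ 2⁻ⁿ e_{f n}`, for injective `f : ℕ → A`, are pairwise
distinct and supported on `A`, so there are at least `λ^ℵ₀ ≥ θ` vectors supported on `A`; the span
`Y` of `θ` of them has cardinality `θ` because `#ℂ = 2^ℵ₀ ≤ θ`. By Bessel's inequality each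
coordinate is nonzero on only countably many members of an orthonormal family, and every member
has a nonzero coordinate in `A`, so an orthonormal family in `Y` has at most `λ · ℵ₀ = λ < θ`
members.
-/

open Cardinal

noncomputable section

universe u

namespace lp

variable (𝕜 : Type*) [RCLike 𝕜] {ι : Type*}

def supportedOn (A : Set ι) : Submodule 𝕜 (lp (fun _ : ι => 𝕜) 2) where
  carrier := {v | ∀ j ∉ A, v j = 0}
  add_mem' hu hv j hj := by simp [hu j hj, hv j hj]
  zero_mem' _ _ := rfl
  smul_mem' c v hv j hj := by simp [hv j hj]

variable {𝕜}

theorem memℓp_extend_geometric (f : ℕ ↪ ι) :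
    Memℓp (Function.extend f (fun n => ((2⁻¹ ^ n : ℝ) : 𝕜)) 0) 2 := by
  rw [memℓp_gen_iff (by norm_num)]
  refine (f.injective.summable_iff fun j hj => ?_).1 ?_
  · simp [Function.extend_apply' _ _ _ (by simpa using hj)]
  · simp only [Function.comp_def, f.injective.extend_apply]
    convert summable_geometric_of_lt_one (r := (2⁻¹ : ℝ) ^ 2) (by positivity) (by norm_num)
      using 2 with n
    simp [← pow_mul, mul_comm]

def geomVec (f : ℕ ↪ ι) : lp (fun _ : ι => 𝕜) 2 :=
  ⟨_, memℓp_extend_geometric f⟩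

theorem geomVec_apply_self (f : ℕ ↪ ι) (n : ℕ) :
    (geomVec f : ι → 𝕜) (f n) = ((2⁻¹ ^ n : ℝ) : 𝕜) :=
  f.injective.extend_apply (fun n => ((2⁻¹ ^ n : ℝ) : 𝕜)) 0 n

theorem geomVec_apply_of_notMem_range (f : ℕ ↪ ι) {j : ι} (hj : j ∉ Set.range f) :
    (geomVec f : ι → 𝕜) j = 0 := by
  simp [geomVec, Function.extend_apply' _ _ _ (by simpa using hj)]

theorem geomVec_mem_supportedOn {A : Set ι} (f : ℕ ↪ ι) (hf : Set.range f ⊆ A) :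
    geomVec f ∈ supportedOn 𝕜 A :=
  fun _ hj => geomVec_apply_of_notMem_range f fun h => hj (hf h)

theorem geomVec_injective : Function.Injective (geomVec (𝕜 := 𝕜) (ι := ι)) := by
  intro f g hfg
  ext n
  have hval : (geomVec g : ι → 𝕜) (f n) = ((2⁻¹ ^ n : ℝ) : 𝕜) := by
    rw [← hfg, geomVec_apply_self]
  obtain ⟨m, hm⟩ : f n ∈ Set.range g := by
    by_contra h
    rw [geomVec_apply_of_notMem_range g h] at hval
    exact (by positivity : (0 : ℝ) < (2⁻¹ : ℝ) ^ n).ne' (by exact_mod_cast hval.symm)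
  rw [← hm, geomVec_apply_self] at hval
  have : m = n := pow_right_injective₀ (by norm_num : (0 : ℝ) < 2⁻¹) (by norm_num)
    (by exact_mod_cast hval)
  rw [← hm, this]

end lp

theorem lp.power_aleph0_le_mk_supportedOn {𝕜 ι : Type u} [RCLike 𝕜] {A : Set ι} (hA : ℵ₀ ≤ #A) :
    #A ^ ℵ₀ ≤ #(lp.supportedOn 𝕜 A) := by
  have := infinite_iff.2 hA
  have hℕ : ℵ₀ = #(ULift ℕ) := by simp
  rw [hℕ, power_def, ← mk_embedding_eq_arrow_of_le (hℕ ▸ hA)]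
  let e (f : ULift ℕ ↪ A) : ℕ ↪ ι := (Equiv.ulift.symm.toEmbedding.trans f).trans (.subtype _)
  refine mk_le_of_injective (f := fun f =>
    (⟨lp.geomVec (e f), lp.geomVec_mem_supportedOn _ ?_⟩ : lp.supportedOn 𝕜 A)) fun f g hfg => ?_
  · rintro _ ⟨n, rfl⟩
    exact (f _).2
  · ext n
    simpa [e] using congr($(lp.geomVec_injective congr($hfg.1)) n.down)

section Orthonormal

variable {𝕜 : Type*} [RCLike 𝕜]

theorem Orthonormal.countable_setOf_lp_apply_ne_zero {ι κ : Type*}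
    {v : κ → lp (fun _ : ι => 𝕜) 2} (hv : Orthonormal 𝕜 v) (j : ι) :
    {k | (v k : ι → 𝕜) j ≠ 0}.Countable := by
  classical
  convert (hv.inner_products_summable (lp.single 2 j 1)).countable_support using 1
  ext k
  simp [lp.inner_single_right]

theorem Orthonormal.mk_le_of_mem_lp_supportedOn {ι κ : Type u}
    {v : κ → lp (fun _ : ι => 𝕜) 2} (hv : Orthonormal 𝕜 v) {A : Set ι}
    (hA : ∀ k, v k ∈ lp.supportedOn 𝕜 A) : #κ ≤ #A * ℵ₀ := by
  have hsupp : ∀ k, ∃ j : A, (v k : ι → 𝕜) j ≠ 0 := by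
    intro k
    by_contra! h
    have : v k = 0 := lp.ext <| funext fun j => by
      by_cases hj : j ∈ A
      · exact h ⟨j, hj⟩
      · exact hA k j hj
    simpa [this] using hv.1 k
  choose g hg using hsupp
  refine mk_le_mk_mul_of_mk_preimage_le g fun j => ?_
  refine le_aleph0_iff_set_countable.2 ((hv.countable_setOf_lp_apply_ne_zero j).mono ?_)
  rintro k rfl
  exact hg k

end Orthonormal

theorem Submodule.mk_span_le {R M : Type u} [Semiring R] [Nontrivial R] [AddCommMonoid M]
    [Module R M] (s : Set M) [Infinite s] : #(span R s) ≤ max #s #R := by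
  rw [Finsupp.span_eq_range_linearCombination, ← mk_finsupp_of_infinite]
  exact mk_le_of_surjective (LinearMap.surjective_rangeRestrict _)

theorem stmt13_general (θ : Cardinal) (hc : 2 ^ ℵ₀ ≤ θ)
    (hlam : ∃ lam : Cardinal, ℵ₀ ≤ lam ∧ lam < θ ∧ θ ≤ lam ^ ℵ₀) :
    ∃ Y : Submodule ℂ (L2 θ), #Y = θ ∧
      ¬ ∃ S : Set (L2 θ), S ⊆ (Y : Set (L2 θ)) ∧
          Orthonormal ℂ (fun s : S => (s : L2 θ)) ∧ #S = θ := by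
  obtain ⟨lam, hlam, hlamθ, hθ⟩ := hlam
  obtain ⟨A, hA⟩ : ∃ A : Set θ.ord.ToType, #A = lam :=
    le_mk_iff_exists_set.1 (by simpa using hlamθ.le)
  obtain ⟨T, hTA, hT⟩ : ∃ T ⊆ (lp.supportedOn ℂ A : Set (L2 θ)), #T = θ :=
    le_mk_iff_exists_subset.1 <| hθ.trans <| by
      rw [← hA] at hlam ⊢
      exact lp.power_aleph0_le_mk_supportedOn hlam
  have : Infinite T := infinite_iff.2 (by rw [hT]; exact hlam.trans hlamθ.le)
  refine ⟨Submodule.span ℂ T, le_antisymm ?_ ?_, ?_⟩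
  · calc #(Submodule.span ℂ T) ≤ max #T #ℂ := Submodule.mk_span_le T
      _ ≤ θ := by rw [hT, mk_complex, ← two_power_aleph0]; exact max_le le_rfl hc
  · exact hT.symm.trans_le (mk_le_mk_of_subset Submodule.subset_span)
  · rintro ⟨S, hSY, hS, hSθ⟩
    have hS_le := hS.mk_le_of_mem_lp_supportedOn fun s => Submodule.span_le.2 hTA (hSY s.2)
    rw [hSθ, hA, mul_eq_left hlam hlam aleph0_ne_zero] at hS_le
    exact hlamθ.not_ge hS_le

/-- if `θ` is a regular cardinal with `2^ℵ₀ ≤ θ` and there is an infinite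
`λ < θ` with `λ^ℵ₀ ≥ θ`, then `ℓ²(θ)` has a linear subspace `Y` of cardinality `θ`
containing no orthonormal family of cardinality `θ`. -/
theorem stmt13 (θ : Cardinal) (hreg : θ.IsRegular) (hc : 2 ^ ℵ₀ ≤ θ)
    (hlam : ∃ lam : Cardinal, ℵ₀ ≤ lam ∧ lam < θ ∧ θ ≤ lam ^ ℵ₀) :
    ∃ Y : Submodule ℂ (L2 θ), #Y = θ ∧
      ¬ ∃ S : Set (L2 θ), S ⊆ (Y : Set (L2 θ)) ∧
          Orthonormal ℂ (fun s : S => (s : L2 θ)) ∧ #S = θ :=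
  stmt13_general θ hc hlam

end
end
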